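/- Define fe_g^{(2c)} and fo_g^{(2c)} by: fe_1^{(2c)} = d - c, fo_1^{(2c)} = 0, and the joint recursion fe_{g+1}^{(2c)} = sum_{a=0}^{d-1} (fe_g^{(2a)} beta(a,c) + fo_g^{(2a)} eta(a,c)), fo_{g+1}^{(2c)} = sum_{a=0}^{d-1} (fo_g^{(2a)} beta(a,c) + fe_g^{(2a)} eta(a,c)), where for a >= c: beta(a,c) = (c+1)(d-a), eta(a,c) = c(d-a), and for a < c: beta(a,c) = (a+1)(d-c), eta(a,c) = a(d-c). Then with p = 2d+1: fe_2^{(2c)} = ((c+1)p^3 - (3c^2+3c)p^2 + (2c^3 - 3c - 1)p + 2c^3 + 3c^2 + c)/24 and fo_2^{(2c)} = (c p^3 - (3c^2+3c)p^2 + (2c^3+6c^2+3c)p - (2c^3+3c^2+c))/24. -/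

import Mathlib

/-- `feo d g c = (fe_{g+1}^{(2c)}, fo_{g+1}^{(2c)})` (genus index offset by one):
`fe_1^{(2c)} = d - c`, `fo_1^{(2c)} = 0`, and
`fe_{g+1}^{(2c)} = ∑_{a=0}^{d-1} (fe_g^{(2a)} β(a,c) + fo_g^{(2a)} η(a,c))`,
`fo_{g+1}^{(2c)} = ∑_{a=0}^{d-1} (fo_g^{(2a)} β(a,c) + fe_g^{(2a)} η(a,c))`,
where `β(a,c) = (min a c + 1)(d - max a c)` and `η(a,c) = (min a c)(d - max a c)`. -/
def feo (d : ℕ) : ℕ → ℕ → ℚ × ℚ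
  | 0, c => ((d : ℚ) - c, 0)
  | g + 1, c =>
      (∑ a ∈ Finset.range d,
          ((feo d g a).1 * (((min a c : ℕ) : ℚ) + 1) * ((d : ℚ) - (max a c : ℕ))
            + (feo d g a).2 * ((min a c : ℕ) : ℚ) * ((d : ℚ) - (max a c : ℕ))),
       ∑ a ∈ Finset.range d,
          ((feo d g a).2 * (((min a c : ℕ) : ℚ) + 1) * ((d : ℚ) - (max a c : ℕ))
            + (feo d g a).1 * ((min a c : ℕ) : ℚ) * ((d : ℚ) - (max a c : ℕ))))

/-! Since `fo_1 = 0`, the values at genus two are the single sums `∑ₐ (d - a) β(a,c)` and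
`∑ₐ (d - a) η(a,c)`. Splitting the range at `a = c` removes the `min`/`max`, leaving sums of
polynomials of degree two in `a`, which the formulas for `∑ a` and `∑ a²` evaluate. -/

open Finset

/-- `∑ₐ fe_1^{(2a)} k(a,c)` for the kernel `k = β` (`e = 1`) or `k = η` (`e = 0`). -/
def minMaxSum (d c : ℕ) (e : ℚ) : ℚ :=
  ∑ a ∈ range d, ((d : ℚ) - a) * (((min a c : ℕ) : ℚ) + e) * ((d : ℚ) - (max a c : ℕ))

lemma feo_one (d c : ℕ) : feo d 1 c = (minMaxSum d c 1, minMaxSum d c 0) := by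
  simp [feo, minMaxSum]

lemma minMaxSum_eq {d c : ℕ} (hc : c < d) (e : ℚ) :
    minMaxSum d c e
      = ((d : ℚ) - c) * ∑ a ∈ range (c + 1), ((d : ℚ) - a) * (a + e)
        + ((c : ℚ) + e) * ∑ a ∈ Ico (c + 1) d, ((d : ℚ) - a) ^ 2 := by
  rw [minMaxSum, ← sum_range_add_sum_Ico _ hc, mul_sum, mul_sum]
  congr 1
  · refine sum_congr rfl fun a ha => ?_
    have hac : a ≤ c := mem_range_succ_iff.mp ha
    rw [min_eq_left hac, max_eq_right hac]
    ring
  · refine sum_congr rfl fun a ha => ?_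
    have hca : c ≤ a := Nat.le_of_succ_le (mem_Ico.mp ha).1
    rw [min_eq_right hca, max_eq_left hca]
    ring

lemma sum_range_sub_mul_add (x e : ℚ) (n : ℕ) :
    ∑ a ∈ range n, (x - a) * (a + e)
      = n * (6 * x * e + 3 * (x - e) * (n - 1) - (n - 1) * (2 * n - 1)) / 6 := by
  induction n with
  | zero => simp
  | succ n ih =>
    rw [sum_range_succ, ih]
    push_cast
    ring

lemma sum_range_sub_sq (x : ℚ) (n : ℕ) :
    ∑ a ∈ range n, (x - a) ^ 2 = n * (6 * x ^ 2 - 6 * x * (n - 1) + (n - 1) * (2 * n - 1)) / 6 := by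
  induction n with
  | zero => simp
  | succ n ih =>
    rw [sum_range_succ, ih]
    push_cast
    ring

theorem genus_two_dims_general (d c : ℕ) (hc : c < d) (p : ℚ) (hp : p = 2 * d + 1) :
    (feo d 1 c).1 = (((c : ℚ) + 1) * p ^ 3 - (3 * (c : ℚ) ^ 2 + 3 * c) * p ^ 2
        + (2 * (c : ℚ) ^ 3 - 3 * c - 1) * p + 2 * (c : ℚ) ^ 3 + 3 * (c : ℚ) ^ 2 + c) / 24 ∧
    (feo d 1 c).2 = ((c : ℚ) * p ^ 3 - (3 * (c : ℚ) ^ 2 + 3 * c) * p ^ 2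
        + (2 * (c : ℚ) ^ 3 + 6 * (c : ℚ) ^ 2 + 3 * c) * p
        - (2 * (c : ℚ) ^ 3 + 3 * (c : ℚ) ^ 2 + c)) / 24 := by
  rw [feo_one, minMaxSum_eq hc, minMaxSum_eq hc, sum_Ico_eq_sub _ hc,
    sum_range_sub_mul_add, sum_range_sub_mul_add, sum_range_sub_sq, sum_range_sub_sq, hp]
  push_cast
  constructor <;> ring

/-- Genus-two formulas for `fe_2^{(2c)}` and `fo_2^{(2c)}` with `p = 2d+1`. -/
theorem genus_two_dims (d c : ℕ) (hd : 1 ≤ d) (hc : c < d) (p : ℚ) (hp : p = 2 * d + 1) :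
    (feo d 1 c).1 = (((c : ℚ) + 1) * p ^ 3 - (3 * (c : ℚ) ^ 2 + 3 * c) * p ^ 2
        + (2 * (c : ℚ) ^ 3 - 3 * c - 1) * p + 2 * (c : ℚ) ^ 3 + 3 * (c : ℚ) ^ 2 + c) / 24 ∧
    (feo d 1 c).2 = ((c : ℚ) * p ^ 3 - (3 * (c : ℚ) ^ 2 + 3 * c) * p ^ 2
        + (2 * (c : ℚ) ^ 3 + 6 * (c : ℚ) ^ 2 + 3 * c) * p
        - (2 * (c : ℚ) ^ 3 + 3 * (c : ℚ) ^ 2 + c)) / 24 :=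
  genus_two_dims_general d c hc p hp
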